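/- Let β_k = 2^k B_k / k! and β_{k,p} := (−1)^p (p−1)! Σ_{0 ≤ i ≤ ⌊(p−1)/2⌋} β_{k+p−2i}/(2i+1)!. Then for every integer m ≥ 1 one has β_{1, 2m−1} = −1/((2m−1)(2m+1)) and β_{1, 2m} = 0. -/

import Mathlib

/-- `β_k = 2^k B_k / k!`, where `B_k` is the k-th Bernoulli number (with `B₁ = −1/2`). -/
noncomputable def smallBeta (k : ℕ) : ℚ := 2 ^ k * bernoulli k / (Nat.factorial k)

/-- `β_{k,p} = (−1)^p (p−1)! Σ_{0 ≤ i ≤ ⌊(p−1)/2⌋} β_{k+p−2i}/(2i+1)!`. -/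
noncomputable def betaKP (k p : ℕ) : ℚ :=
  (-1) ^ p * (Nat.factorial (p - 1)) *
    ∑ i ∈ Finset.range ((p - 1) / 2 + 1),
      smallBeta (k + p - 2 * i) / (Nat.factorial (2 * i + 1))

/-!
Let `β(x) = 2x/(e^{2x} - 1) = ∑ β_k x^k`. Since `e^{2x} - 1 = (e^x + 1)(e^x - 1)`, we get
`β(x) (e^x + 1) = 2 · x/(e^x - 1)`, so the coefficient of `x^N` in `β(x) e^x` is `2 B_N/N! - β_N`,
which vanishes for odd `N ≥ 3`. For `N = 2m + 1`, and as `β_k = 0` for odd `k ≥ 3` while `β_1 = -1`,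
this reads `∑_{i ≤ m} β_{2m-2i}/(2i+1)! = 1/(2m)!`; dropping the term `β_0/(2m+1)!` gives the sum
defining `β_{1,2m-1}`. In `β_{1,2m}` every index `2m + 1 - 2i` is odd and at least `3`.
-/

open Nat Finset PowerSeries

theorem Finset.sum_range_two_mul {M : Type*} [AddCommMonoid M] (f : ℕ → M) (n : ℕ) :
    ∑ k ∈ range (2 * n), f k = ∑ i ∈ range n, (f (2 * i) + f (2 * i + 1)) := by
  induction n with
  | zero => simp
  | succ n ih =>
    rw [show 2 * (n + 1) = 2 * n + 1 + 1 by ring, sum_range_succ, sum_range_succ, ih,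
      sum_range_succ, add_assoc]

lemma coeff_rescale_two_bernoulliPowerSeries (n : ℕ) :
    coeff n (rescale (2 : ℚ) (bernoulliPowerSeries ℚ)) = smallBeta n := by
  simp [bernoulliPowerSeries, coeff_rescale, smallBeta, mul_div_assoc]

lemma smallBeta_zero : smallBeta 0 = 1 := by
  simp [smallBeta]

lemma smallBeta_one : smallBeta 1 = -1 := by
  norm_num [smallBeta, bernoulli_one]

lemma smallBeta_eq_zero_of_odd {n : ℕ} (h_odd : Odd n) (hlt : 1 < n) : smallBeta n = 0 := by
  simp [smallBeta, bernoulli_eq_zero_of_odd h_odd hlt]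

lemma rescale_two_bernoulliPowerSeries_mul_exp_add_one :
    rescale (2 : ℚ) (bernoulliPowerSeries ℚ) * (exp ℚ + 1) = 2 * bernoulliPowerSeries ℚ := by
  have hexp : exp ℚ - 1 ≠ 0 := fun h ↦ by
    simpa [coeff_exp] using congrArg (coeff (R := ℚ) 1) h
  have hrescale : rescale (2 : ℚ) (exp ℚ - 1) = (exp ℚ + 1) * (exp ℚ - 1) := by
    rw [map_sub, map_one, ← Nat.cast_ofNat, ← exp_pow_eq_rescale_exp]
    ring
  refine mul_right_cancel₀ hexp ?_
  calc rescale (2 : ℚ) (bernoulliPowerSeries ℚ) * (exp ℚ + 1) * (exp ℚ - 1)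
      = rescale (2 : ℚ) (bernoulliPowerSeries ℚ * (exp ℚ - 1)) := by
        rw [map_mul, hrescale, mul_assoc]
    _ = 2 * (bernoulliPowerSeries ℚ * (exp ℚ - 1)) := by
        rw [bernoulliPowerSeries_mul_exp_sub_one, rescale_X, ← map_ofNat C 2]
    _ = 2 * bernoulliPowerSeries ℚ * (exp ℚ - 1) := by ring

lemma sum_range_smallBeta_sub_div_factorial (N : ℕ) :
    ∑ i ∈ range (N + 1), smallBeta (N - i) / (i ! : ℚ) =
      2 * bernoulli N / (N ! : ℚ) - smallBeta N := by
  have h := congrArg (coeff N) (show exp ℚ * rescale (2 : ℚ) (bernoulliPowerSeries ℚ)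
      = 2 * bernoulliPowerSeries ℚ - rescale (2 : ℚ) (bernoulliPowerSeries ℚ) by
    linear_combination rescale_two_bernoulliPowerSeries_mul_exp_add_one)
  rw [coeff_mul, Nat.sum_antidiagonal_eq_sum_range_succ_mk, map_sub, two_mul, map_add] at h
  simp only [coeff_rescale_two_bernoulliPowerSeries, coeff_exp] at h
  simp only [bernoulliPowerSeries, coeff_mk, Algebra.algebraMap_self, RingHom.id_apply] at h
  rw [mul_div_assoc, two_mul, ← h]
  exact sum_congr rfl fun i _ ↦ by ring

lemma sum_range_smallBeta_two_mul_sub_div_factorial {m : ℕ} (hm : 1 ≤ m) :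
    ∑ i ∈ range (m + 1), smallBeta (2 * m - 2 * i) / ((2 * i + 1) ! : ℚ) =
      1 / ((2 * m) ! : ℚ) := by
  have hodd : Odd (2 * m + 1) := odd_two_mul_add_one m
  have h := sum_range_smallBeta_sub_div_factorial (2 * m + 1)
  rw [bernoulli_eq_zero_of_odd hodd (by omega), smallBeta_eq_zero_of_odd hodd (by omega),
    show 2 * m + 1 + 1 = 2 * (m + 1) by ring, sum_range_two_mul, sum_add_distrib] at h
  have hodd_terms : ∑ i ∈ range (m + 1), smallBeta (2 * m + 1 - 2 * i) / ((2 * i) ! : ℚ)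
      = -1 / ((2 * m) ! : ℚ) := by
    rw [sum_eq_single_of_mem m (self_mem_range_succ m), show 2 * m + 1 - 2 * m = 1 by omega,
      smallBeta_one]
    intro i hi him
    have hi := mem_range.mp hi
    rw [smallBeta_eq_zero_of_odd ⟨m - i, by omega⟩ (by omega), zero_div]
  rw [hodd_terms, sum_congr rfl fun i _ ↦ by
    rw [show 2 * m + 1 - (2 * i + 1) = 2 * m - 2 * i by omega]] at h
  linear_combination h

lemma betaKP_one_two_mul_sub_one {m : ℕ} (hm : 1 ≤ m) :
    betaKP 1 (2 * m - 1) = -(1 / ((2 * (m : ℚ) - 1) * (2 * (m : ℚ) + 1))) := by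
  obtain ⟨n, rfl⟩ : ∃ n, m = n + 1 := ⟨m - 1, by omega⟩
  have hsum := sum_range_smallBeta_two_mul_sub_div_factorial (m := n + 1) (by omega)
  rw [sum_range_succ, Nat.sub_self, smallBeta_zero] at hsum
  unfold betaKP
  rw [show 2 * (n + 1) - 1 = 2 * n + 1 by omega, show (2 * n + 1 - 1) / 2 + 1 = n + 1 by omega,
    show 2 * n + 1 - 1 = 2 * n by omega, (odd_two_mul_add_one n).neg_one_pow,
    sum_congr rfl fun i _ ↦ by rw [show 1 + (2 * n + 1) - 2 * i = 2 * (n + 1) - 2 * i by omega],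
    eq_sub_of_add_eq hsum, show 2 * (n + 1) = 2 * n + 1 + 1 by ring]
  push_cast [Nat.factorial_succ]
  rw [show 2 * ((n : ℚ) + 1) - 1 = 2 * n + 1 by ring]
  field_simp
  ring

lemma betaKP_one_two_mul {m : ℕ} (hm : 1 ≤ m) : betaKP 1 (2 * m) = 0 := by
  unfold betaKP
  refine mul_eq_zero_of_right _ (sum_eq_zero fun i hi ↦ ?_)
  have hi := mem_range.mp hi
  rw [smallBeta_eq_zero_of_odd ⟨m - i, by omega⟩ (by omega), zero_div]

/-- `β_{1,2m−1} = −1/((2m−1)(2m+1))` and `β_{1,2m} = 0` for every `m ≥ 1`. -/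
theorem statement_11 (m : ℕ) (hm : 1 ≤ m) :
    betaKP 1 (2 * m - 1) = -(1 / ((2 * (m : ℚ) - 1) * (2 * (m : ℚ) + 1))) ∧
    betaKP 1 (2 * m) = 0 :=
  ⟨betaKP_one_two_mul_sub_one hm, betaKP_one_two_mul hm⟩
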